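/- Let C be the middle-third Cantor set. Then {1/x₁ + 1/x₂ + 1/x₃ + 1/x₄ : x₁, x₂ ∈ C ∩ [8/27, 1/3], x₃, x₄ ∈ C ∩ [8/9, 1]} ⊇ [8, 9]. -/

import Mathlib

open Set Filter Topology

/-!
Substituting `uᵢ = 3xᵢ` for `i = 1, 2`, the claim is that every `t ∈ [8, 9]` is
`3/u₁ + 3/u₂ + 1/u₃ + 1/u₄` with all `uᵢ ∈ K = C ∩ [8/9, 1]`, a set lying in `[m, M] = [8/9, 1]`.
For each coordinate keep a cell `[a, a + ℓ]` of `K` (an affine copy of `C` inside `K`) such that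
`t` lies between the values of `∑ wᵢ / uᵢ` at the right and at the left endpoints. Trisecting
the cell of coordinate `i` splits its image `[wᵢ/(a+ℓ), wᵢ/a]` into two pieces separated by a gap
of length at most `wᵢ ℓ / (3m²)`, while the other coordinates sweep an interval of length at least
`∑_{j ≠ i} wⱼ ℓⱼ / M²`; when the gap is the shorter of the two, one of the pieces still brackets
`t`. Refining all coordinates level by level, the values at the left endpoints converge to `t`,
and the set of values of `∑ wᵢ / uᵢ` on `K⁴` is compact.
-/

lemma div_three_mem_cantorSet {x : ℝ} (hx : x ∈ cantorSet) : x / 3 ∈ cantorSet := by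
  rw [cantorSet_eq_union_halves]
  exact Or.inl ⟨x, hx, rfl⟩

lemma two_add_div_three_mem_cantorSet {x : ℝ} (hx : x ∈ cantorSet) :
    (2 + x) / 3 ∈ cantorSet := by
  rw [cantorSet_eq_union_halves]
  exact Or.inr ⟨x, hx, rfl⟩

lemma one_mem_cantorSet : (1 : ℝ) ∈ cantorSet :=
  mem_iInter.mpr fun n => by
    induction n with
    | zero => simp
    | succ n ih => exact Or.inr ⟨1, ih, by norm_num⟩

def IsCantorCell (S : Set ℝ) (a ℓ : ℝ) : Prop :=
  MapsTo (fun x => a + ℓ * x) cantorSet S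

namespace IsCantorCell

variable {S : Set ℝ} {a ℓ : ℝ}

lemma left (h : IsCantorCell S a ℓ) : IsCantorCell S a (ℓ / 3) := fun x hx => by
  convert h (div_three_mem_cantorSet hx) using 1
  ring

lemma right (h : IsCantorCell S a ℓ) : IsCantorCell S (a + 2 * ℓ / 3) (ℓ / 3) := fun x hx => by
  convert h (two_add_div_three_mem_cantorSet hx) using 1
  ring

lemma left_mem (h : IsCantorCell S a ℓ) : a ∈ S := by
  simpa using h zero_mem_cantorSet

lemma right_mem (h : IsCantorCell S a ℓ) : a + ℓ ∈ S := by
  simpa using h one_mem_cantorSet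

end IsCantorCell

lemma div_sub_div_add_eq {w x d : ℝ} (hx : x ≠ 0) (hxd : x + d ≠ 0) :
    w / x - w / (x + d) = w * d / (x * (x + d)) := by
  field_simp
  ring

lemma div_sub_div_add_le {w x d m : ℝ} (hw : 0 ≤ w) (hm : 0 < m) (hx : m ≤ x) (hd : 0 ≤ d) :
    w / x - w / (x + d) ≤ w * d / m ^ 2 := by
  have hx0 : 0 < x := hm.trans_le hx
  rw [div_sub_div_add_eq hx0.ne' (by positivity)]
  exact div_le_div_of_nonneg_left (by positivity) (by positivity) (by nlinarith)

lemma le_div_sub_div_add {w x d M : ℝ} (hw : 0 ≤ w) (hx : 0 < x) (hd : 0 ≤ d) (hM : x + d ≤ M) :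
    w * d / M ^ 2 ≤ w / x - w / (x + d) := by
  rw [div_sub_div_add_eq hx.ne' (by positivity)]
  exact div_le_div_of_nonneg_left (by positivity) (by positivity) (by nlinarith)

section Refinement

variable {ι : Type*} [Fintype ι] {S : Set ℝ} {m M t : ℝ} {w : ι → ℝ}

lemma sum_eq_add_sum_erase_of_ne [DecidableEq ι] {f g : ι → ℝ} (i : ι) (h : ∀ j ≠ i, g j = f j) :
    ∑ j, g j = g i + ∑ j ∈ Finset.univ.erase i, f j := by
  rw [← Finset.add_sum_erase _ _ (Finset.mem_univ i)]
  exact congrArg _ (Finset.sum_congr rfl fun j hj => h j (Finset.ne_of_mem_erase hj))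

lemma exists_refine_coord [DecidableEq ι] (hSm : S ⊆ Icc m M) (hm : 0 < m) (hw : ∀ j, 0 ≤ w j)
    {a ℓ : ι → ℝ} (hℓ : ∀ j, 0 ≤ ℓ j) (hcell : ∀ j, IsCantorCell S (a j) (ℓ j)) (i : ι)
    (hgap : w i * (ℓ i / 3) / m ^ 2 ≤ ∑ j ∈ Finset.univ.erase i, w j * ℓ j / M ^ 2)
    (ht : t ∈ Icc (∑ j, w j / (a j + ℓ j)) (∑ j, w j / a j)) :
    ∃ c, IsCantorCell S c (ℓ i / 3) ∧
      t ∈ Icc (∑ j, w j / (Function.update a i c j + Function.update ℓ i (ℓ i / 3) j))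
        (∑ j, w j / Function.update a i c j) := by
  have hlo (j) : m ≤ a j := (hSm (hcell j).left_mem).1
  have hhi (j) : a j + ℓ j ≤ M := (hSm (hcell j).right_mem).2
  set r := ∑ j ∈ Finset.univ.erase i, w j / (a j + ℓ j)
  set s := ∑ j ∈ Finset.univ.erase i, w j / a j
  have hsplit (c : ℝ) :
      ∑ j, w j / (Function.update a i c j + Function.update ℓ i (ℓ i / 3) j) =
        w i / (c + ℓ i / 3) + r ∧
      ∑ j, w j / Function.update a i c j = w i / c + s := by
    constructor
    · rw [sum_eq_add_sum_erase_of_ne (f := fun j => w j / (a j + ℓ j)) i fun j hj => by simp [hj]]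
      simp [r]
    · rw [sum_eq_add_sum_erase_of_ne (f := fun j => w j / a j) i fun j hj => by simp [hj]]
      simp [s]
  have hrest : ∑ j ∈ Finset.univ.erase i, w j * ℓ j / M ^ 2 ≤ s - r := by
    rw [← Finset.sum_sub_distrib]
    exact Finset.sum_le_sum fun j _ =>
      le_div_sub_div_add (hw j) (hm.trans_le (hlo j)) (hℓ j) (hhi j)
  have hmiddle : w i / (a i + ℓ i / 3) - w i / (a i + ℓ i / 3 + ℓ i / 3) ≤ w i * (ℓ i / 3) / m ^ 2 :=
    div_sub_div_add_le (hw i) hm (by linarith [hlo i, hℓ i]) (by linarith [hℓ i])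
  rw [← Finset.add_sum_erase _ _ (Finset.mem_univ i),
    ← Finset.add_sum_erase _ (fun j => w j / a j) (Finset.mem_univ i)] at ht
  rcases le_or_gt t (w i / (a i + 2 * ℓ i / 3) + s) with hright | hleft
  · refine ⟨a i + 2 * ℓ i / 3, (hcell i).right, ?_⟩
    rw [(hsplit _).1, (hsplit _).2, show a i + 2 * ℓ i / 3 + ℓ i / 3 = a i + ℓ i by ring]
    exact ⟨ht.1, hright⟩
  · refine ⟨a i, (hcell i).left, ?_⟩
    rw [(hsplit _).1, (hsplit _).2]
    refine ⟨?_, ht.2⟩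
    rw [show a i + ℓ i / 3 + ℓ i / 3 = a i + 2 * ℓ i / 3 by ring] at hmiddle
    linarith

lemma exists_refine_level [DecidableEq ι] (hSm : S ⊆ Icc m M) (hm : 0 < m) (hw : ∀ i, 0 ≤ w i)
    (hbal : ∀ i, w i / m ^ 2 ≤ (∑ j, w j - w i) / M ^ 2) {L : ℝ} (hL : 0 ≤ L) {a : ι → ℝ}
    (hcell : ∀ i, IsCantorCell S (a i) L) (ht : t ∈ Icc (∑ i, w i / (a i + L)) (∑ i, w i / a i)) :
    ∃ b : ι → ℝ, (∀ i, IsCantorCell S (b i) (L / 3)) ∧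
      t ∈ Icc (∑ i, w i / (b i + L / 3)) (∑ i, w i / b i) := by
  suffices h : ∀ s : Finset ι, ∃ b : ι → ℝ,
      (∀ i, IsCantorCell S (b i) (if i ∈ s then L / 3 else L)) ∧
      t ∈ Icc (∑ i, w i / (b i + if i ∈ s then L / 3 else L)) (∑ i, w i / b i) by
    simpa using h Finset.univ
  intro s
  induction s using Finset.induction_on with
  | empty => exact ⟨a, by simpa using hcell, by simpa using ht⟩
  | insert i s hi ih =>
    obtain ⟨b, hb, hbt⟩ := ih
    set ℓ : ι → ℝ := fun j => if j ∈ s then L / 3 else L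
    have hℓ (j) : L / 3 ≤ ℓ j := by simp only [ℓ]; split_ifs <;> linarith
    have hgap : w i * (ℓ i / 3) / m ^ 2 ≤ ∑ j ∈ Finset.univ.erase i, w j * ℓ j / M ^ 2 :=
      calc w i * (ℓ i / 3) / m ^ 2 = L / 3 * (w i / m ^ 2) := by simp only [ℓ, if_neg hi]; ring
        _ ≤ L / 3 * ((∑ j, w j - w i) / M ^ 2) := mul_le_mul_of_nonneg_left (hbal i) (by positivity)
        _ = ∑ j ∈ Finset.univ.erase i, w j * (L / 3) / M ^ 2 := by
          rw [← Finset.sum_erase_eq_sub (Finset.mem_univ i), Finset.sum_div, Finset.mul_sum]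
          exact Finset.sum_congr rfl fun _ _ => by ring
        _ ≤ ∑ j ∈ Finset.univ.erase i, w j * ℓ j / M ^ 2 := by
          gcongr with j; exact hw j; exact hℓ j
    obtain ⟨c, hc, hct⟩ := exists_refine_coord (a := b) (ℓ := ℓ) hSm hm hw
      (fun j => by linarith [hℓ j]) hb i hgap hbt
    have hupd (j : ι) :
        (if j ∈ insert i s then L / 3 else L) = Function.update ℓ i (ℓ i / 3) j := by
      by_cases hj : j = i <;> simp [ℓ, hj, hi]
    refine ⟨Function.update b i c, fun j => ?_, by simpa only [hupd] using hct⟩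
    rw [hupd]
    by_cases hj : j = i
    · subst hj; simpa using hc
    · simpa [hj] using hb j

theorem Icc_subset_image_sum_div_of_isCantorCell (hS : IsCompact S) (hSm : S ⊆ Icc m M)
    (hm : 0 < m) (hcell : IsCantorCell S m (M - m)) (hw : ∀ i, 0 ≤ w i)
    (hbal : ∀ i, w i / m ^ 2 ≤ (∑ j, w j - w i) / M ^ 2) :
    Icc ((∑ i, w i) / M) ((∑ i, w i) / m) ⊆
      (fun u : ι → ℝ => ∑ i, w i / u i) '' univ.pi fun _ => S := by
  classical
  intro t ht
  have hmM : m ≤ M := (hSm hcell.left_mem).2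
  have hlevel (n : ℕ) : ∃ a : ι → ℝ, (∀ i, IsCantorCell S (a i) ((M - m) / 3 ^ n)) ∧
      t ∈ Icc (∑ i, w i / (a i + (M - m) / 3 ^ n)) (∑ i, w i / a i) := by
    induction n with
    | zero => exact ⟨fun _ => m, fun _ => by simpa using hcell, by simpa [Finset.sum_div] using ht⟩
    | succ n ih =>
      obtain ⟨a, ha, hat⟩ := ih
      rw [pow_succ, ← div_div]
      exact exists_refine_level hSm hm hw hbal (by positivity) ha hat
  choose a ha hat using hlevel
  have hF : ContinuousOn (fun u : ι → ℝ => ∑ i, w i / u i) (univ.pi fun _ => S) :=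
    continuousOn_finsetSum _ fun i _ => continuousOn_const.div (continuous_apply i).continuousOn
      fun u hu => (hm.trans_le (hSm (hu i (mem_univ i))).1).ne'
  have hclosed := ((isCompact_univ_pi fun _ => hS).image_of_continuousOn hF).isClosed
  have hmem (n : ℕ) : a n ∈ univ.pi fun _ => S := fun i _ => (ha n i).left_mem
  have herr (n : ℕ) :
      ∑ i, w i / a n i ≤ t + (∑ i, w i) * ((M - m) / 3 ^ n) / m ^ 2 := by
    have hsub : ∑ i, w i / a n i - ∑ i, w i / (a n i + (M - m) / 3 ^ n) ≤
        ∑ i, w i * ((M - m) / 3 ^ n) / m ^ 2 := by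
      rw [← Finset.sum_sub_distrib]
      exact Finset.sum_le_sum fun i _ => div_sub_div_add_le (hw i) hm
        (hSm (ha n i).left_mem).1 (by have := sub_nonneg.2 hmM; positivity)
    rw [← Finset.sum_div, ← Finset.sum_mul] at hsub
    linarith [(hat n).1]
  have hlim : Tendsto (fun n : ℕ => t + (∑ i, w i) * ((M - m) / 3 ^ n) / m ^ 2) atTop (𝓝 t) := by
    have h3 : Tendsto (fun n : ℕ => (M - m) / 3 ^ n) atTop (𝓝 0) :=
      tendsto_const_nhds.div_atTop (tendsto_pow_atTop_atTop_of_one_lt (by norm_num))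
    simpa using ((h3.const_mul (∑ i, w i)).div_const (m ^ 2)).const_add t
  exact hclosed.mem_of_tendsto
    (tendsto_of_tendsto_of_tendsto_of_le_of_le tendsto_const_nhds hlim (fun n => (hat n).2) herr)
    (Eventually.of_forall fun n => mem_image_of_mem _ (hmem n))

end Refinement

lemma isCantorCell_cantorSet_inter_Icc_eight_ninths :
    IsCantorCell (cantorSet ∩ Icc (8 / 9) 1) (8 / 9) (1 - 8 / 9) := fun x hx => by
  obtain ⟨hx0, hx1⟩ := cantorSet_subset_unitInterval hx
  refine ⟨?_, by constructor <;> linarith⟩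
  convert two_add_div_three_mem_cantorSet (two_add_div_three_mem_cantorSet hx) using 1
  ring

theorem four_reciprocals_cantorSet_supset_Icc_eight_nine :
    Set.Icc (8 : ℝ) 9 ⊆
      {y : ℝ | ∃ x₁ ∈ cantorSet ∩ Set.Icc (8 / 27 : ℝ) (1 / 3),
        ∃ x₂ ∈ cantorSet ∩ Set.Icc (8 / 27 : ℝ) (1 / 3),
        ∃ x₃ ∈ cantorSet ∩ Set.Icc (8 / 9 : ℝ) 1,
        ∃ x₄ ∈ cantorSet ∩ Set.Icc (8 / 9 : ℝ) 1,
        y = 1 / x₁ + 1 / x₂ + 1 / x₃ + 1 / x₄} := by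
  intro y hy
  set w : Fin 4 → ℝ := ![3, 3, 1, 1]
  have hsum : ∑ i, w i = 8 := by simp [w, Fin.sum_univ_succ]; norm_num
  have hbal (i : Fin 4) : w i / (8 / 9) ^ 2 ≤ (∑ j, w j - w i) / 1 ^ 2 := by
    rw [hsum]; fin_cases i <;> norm_num [w]
  obtain ⟨u, hu, hyu⟩ := Icc_subset_image_sum_div_of_isCantorCell
    (isCompact_cantorSet.inter_right isClosed_Icc) inter_subset_right (by norm_num)
    isCantorCell_cantorSet_inter_Icc_eight_ninths (fun i => by fin_cases i <;> norm_num [w]) hbal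
    (show y ∈ Icc ((∑ i, w i) / 1) ((∑ i, w i) / (8 / 9)) by rw [hsum]; norm_num; exact hy)
  have third_mem (i : Fin 4) : u i / 3 ∈ cantorSet ∩ Icc (8 / 27) (1 / 3) := by
    obtain ⟨hC, h₁, h₂⟩ := hu i (mem_univ i)
    exact ⟨div_three_mem_cantorSet hC, by constructor <;> linarith⟩
  refine ⟨u 0 / 3, third_mem 0, u 1 / 3, third_mem 1, u 2, hu 2 (mem_univ 2),
    u 3, hu 3 (mem_univ 3), ?_⟩
  rw [← hyu]
  simp [w, Fin.sum_univ_four]
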